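/- arXiv:1704.06102 — 10 statements merged into one kernel-verified Lean document; each statement's English description precedes it below -/
import Mathlib

section
/- Let R be a commutative integral domain and φ : R → R a surjective ring homomorphism. Define A₀ = ker φ and Aₙ = φ⁻¹(Aₙ₋₁) for n ≥ 1. If Aₙ = Aₙ₊₁ for some n, then ker φ = 0, i.e., φ is injective. -/
theorem stmt_1 {R : Type*} [CommRing R] [IsDomain R]
    (φ : R →+* R) (hφ : Function.Surjective φ)
    (A : ℕ → Ideal R) (hA0 : A 0 = RingHom.ker φ)
    (hA : ∀ n, A (n + 1) = (A n).comap φ)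
    (h : ∃ n, A n = A (n + 1)) :
    RingHom.ker φ = ⊥ ∧ Function.Injective φ := by
  have hmem : ∀ n x, x ∈ A n ↔ (φ ^ (n + 1)) x = 0 := by
    intro n
    induction n with
    | zero => intro x; simp [hA0, RingHom.mem_ker, pow_one]
    | succ n ih =>
      intro x
      rw [hA n, Ideal.mem_comap, ih (φ x)]
      simp [pow_succ]
  have hsurj : ∀ n, Function.Surjective ⇑(φ ^ n) := by
    intro n
    induction n with
    | zero => simpa using Function.surjective_id
    | succ n ih =>
      have : ⇑(φ ^ (n + 1)) = ⇑(φ ^ n) ∘ ⇑φ := by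
        rw [pow_succ]; rfl
      rw [this]
      exact ih.comp hφ
  obtain ⟨n, hn⟩ := h
  have hker : RingHom.ker φ = ⊥ := by
    ext x
    simp only [RingHom.mem_ker, Ideal.mem_bot]
    constructor
    · intro hx
      obtain ⟨y, hy⟩ := hsurj (n + 1) x
      have hy2 : y ∈ A (n + 1) := by
        rw [hmem, pow_succ', RingHom.mul_def, RingHom.comp_apply, hy, hx]
      rw [← hn, hmem] at hy2
      rw [← hy, hy2]
    · intro hx; simp [hx]
  exact ⟨hker, (RingHom.injective_iff_ker_eq_bot φ).mpr hker⟩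
end

section
/- If R is a commutative integral domain of finite Krull dimension, then R is Hopfian, i.e., every surjective ring homomorphism from R onto R is an automorphism. -/
theorem stmt_3 {R : Type*} [CommRing R] [IsDomain R]
    (hdim : ringKrullDim R < ⊤) :
    ∀ φ : R →+* R, Function.Surjective φ → Function.Bijective φ := by
  intro φ hsurj
  refine ⟨?_, hsurj⟩
  rw [RingHom.injective_iff_ker_eq_bot]
  by_contra hker
  -- ker φ is a nonzero prime ideal
  have hPprime : (RingHom.ker φ).IsPrime := RingHom.ker_isPrime φ
  -- the comap map on prime spectra
  have hinj : Function.Injective (PrimeSpectrum.comap φ) :=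
    PrimeSpectrum.comap_injective_of_surjective φ hsurj
  have hmono : Monotone (PrimeSpectrum.comap φ) := fun a b hab =>
    Ideal.comap_mono hab
  have hstrict : StrictMono (PrimeSpectrum.comap φ) :=
    hmono.strictMono_of_injective hinj
  -- For every chain, we get a longer chain
  have key : ∀ p : LTSeries (PrimeSpectrum R),
      ((p.length : ℕ∞) + 1 : WithBot ℕ∞) ≤ ringKrullDim R := by
    intro p
    have hlt : (⟨⊥, Ideal.bot_prime⟩ : PrimeSpectrum R) < (p.map _ hstrict).head := by
      show (⊥ : Ideal R) < _
      refine bot_lt_iff_ne_bot.mpr ?_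
      intro h
      apply hker
      have : RingHom.ker φ ≤ (PrimeSpectrum.comap φ p.head).asIdeal :=
        Ideal.ker_le_comap _
      rw [show (p.map _ hstrict).head = PrimeSpectrum.comap φ p.head from rfl] at h
      rw [h] at this
      exact le_bot_iff.mp this
    have := Order.LTSeries.length_le_krullDim ((p.map _ hstrict).cons ⟨⊥, Ideal.bot_prime⟩ hlt)
    simpa [RelSeries.cons_length, ringKrullDim] using this
  -- extract a natural number dimension
  have hnontriv : Nontrivial R := inferInstance
  have hne : ringKrullDim R ≠ ⊥ := by
    have := ringKrullDim_nonneg_of_nontrivial (R := R)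
    intro h; rw [h] at this; exact absurd this (by simp)
  obtain ⟨n, hn⟩ := WithBot.ne_bot_iff_exists.mp hne
  have hntop : n ≠ ⊤ := by
    intro h; rw [h] at hn; rw [← hn] at hdim; simp at hdim
  obtain ⟨m, rfl⟩ := WithTop.ne_top_iff_exists.mp hntop
  -- each chain has length + 1 ≤ m
  have key2 : ∀ p : LTSeries (PrimeSpectrum R), p.length + 1 ≤ m := by
    intro p
    have := key p
    rw [← hn] at this
    have h2 : ((p.length : ℕ∞) + 1 : ℕ∞) ≤ (m : ℕ∞) := by
      rw [← WithBot.coe_le_coe]; push_cast; exact this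
    have h3 : ((p.length + 1 : ℕ) : ℕ∞) ≤ (m : ℕ∞) := by push_cast; exact h2
    exact Nat.cast_le.mp h3
  -- but the krull dimension is the sup of lengths
  have : Nonempty (PrimeSpectrum R) := inferInstance
  have hsup : ringKrullDim R = ((⨆ p : LTSeries (PrimeSpectrum R), (p.length : ℕ∞) : ℕ∞) : WithBot ℕ∞) :=
    Order.krullDim_eq_iSup_length
  rw [← hn] at hsup
  have hsup' : (⨆ p : LTSeries (PrimeSpectrum R), (p.length : ℕ∞)) = (m : ℕ∞) :=
    WithBot.coe_injective hsup.symm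
  -- m ≥ 1 since there is a chain
  obtain ⟨x⟩ := ‹Nonempty (PrimeSpectrum R)›
  have hm1 : 1 ≤ m := by
    have := key2 (RelSeries.singleton _ x)
    simpa using this
  have hle : (⨆ p : LTSeries (PrimeSpectrum R), (p.length : ℕ∞)) ≤ ((m - 1 : ℕ) : ℕ∞) := by
    refine iSup_le fun p => ?_
    have := key2 p
    exact_mod_cast Nat.le_sub_one_of_lt (Nat.lt_of_lt_of_le (Nat.lt_succ_self _) this)
  rw [hsup'] at hle
  have : m ≤ m - 1 := by exact_mod_cast hle
  omega
end

section
/- If R is a commutative integral domain with no strictly increasing infinite ascending chain of prime ideals, then R is Hopfian. -/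
theorem stmt_4 {R : Type*} [CommRing R] [IsDomain R]
    (hchain : ∀ c : ℕ → Ideal R, (∀ n, (c n).IsPrime) → (∀ n, c n ≤ c (n + 1)) →
      ∃ n, ∀ m, n ≤ m → c m = c n) :
    ∀ φ : R →+* R, Function.Surjective φ → Function.Bijective φ := by
  intro φ hsurj
  refine ⟨?_, hsurj⟩
  set c : ℕ → Ideal R := fun n => RingHom.ker (φ ^ n) with hc
  have hle : ∀ n, c n ≤ c (n + 1) := by
    intro n x hx
    simp only [hc, RingHom.mem_ker, RingHom.coe_pow] at hx ⊢
    rw [Function.iterate_succ_apply', hx, map_zero]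
  obtain ⟨n, hn⟩ := hchain c (fun n => RingHom.ker_isPrime _) hle
  have hpowsurj : Function.Surjective (φ ^ n) := by
    rw [RingHom.coe_pow]; exact Function.Surjective.iterate hsurj n
  rw [injective_iff_map_eq_zero]
  intro x hx
  obtain ⟨y, hy⟩ := hpowsurj x
  have hy1 : y ∈ c (n + 1) := by
    simp only [hc, RingHom.mem_ker, RingHom.coe_pow]
    rw [Function.iterate_succ_apply']
    have : (φ ^ n) y = x := hy
    rw [RingHom.coe_pow] at this
    rw [this, hx]
  rw [hn (n + 1) (Nat.le_succ n)] at hy1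
  have : (φ ^ n) y = 0 := hy1
  rw [← hy, this]
end

section
/- Let R be a commutative Hopfian integral domain and φ : R[x] → R[x] a surjective ring homomorphism such that φ(R) ⊆ R. Then the restriction of φ to R is a surjective ring homomorphism from R onto R. -/
/-!
If `φ` maps constants to constants via `f`, then `φ p = (p.map f).comp (φ X)`. Surjectivity forces
`φ X` to be nonconstant, so over a domain, where degrees multiply under composition, `φ p` is constant
only when `p.map f` is; hence every constant `C s` is `φ (C r) = C (f r)` for some `r`.
-/

namespace Polynomial

variable {R S : Type*} [CommSemiring R] [CommSemiring S]

theorem apply_eq_map_comp_of_map_C (φ : R[X] →+* S[X]) (f : R →+* S)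
    (hf : ∀ r, φ (C r) = C (f r)) (p : R[X]) : φ p = (p.map f).comp (φ X) := by
  have : φ = eval₂RingHom (C.comp f) (φ X) := ringHom_ext (by simp [hf]) (by simp)
  rw [comp, eval₂_map, ← coe_eval₂RingHom, ← this]

theorem natDegree_apply_X_ne_zero_of_surjective [Nontrivial S] {φ : R[X] →+* S[X]}
    (hφ : Function.Surjective φ) (f : R →+* S) (hf : ∀ r, φ (C r) = C (f r)) :
    (φ X).natDegree ≠ 0 := by
  intro h
  obtain ⟨c, hc⟩ := natDegree_eq_zero.mp h
  obtain ⟨p, hp⟩ := hφ X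
  rw [apply_eq_map_comp_of_map_C φ f hf, ← hc, comp_C] at hp
  exact X_ne_C _ hp.symm

theorem surjective_of_surjective_of_map_C [NoZeroDivisors S] [Nontrivial S]
    {φ : R[X] →+* S[X]} (hφ : Function.Surjective φ) (f : R →+* S)
    (hf : ∀ r, φ (C r) = C (f r)) : Function.Surjective f := by
  intro s
  obtain ⟨p, hp⟩ := hφ (C s)
  rw [apply_eq_map_comp_of_map_C φ f hf] at hp
  have hdeg : (p.map f).natDegree * (φ X).natDegree = 0 := by
    rw [← natDegree_comp, hp, natDegree_C]
  have hconst : p.map f = C (f (p.coeff 0)) := by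
    rw [eq_C_of_natDegree_eq_zero ((mul_eq_zero.mp hdeg).resolve_right
      (natDegree_apply_X_ne_zero_of_surjective hφ f hf)), coeff_map]
  rw [hconst, C_comp] at hp
  exact ⟨p.coeff 0, C_injective hp⟩

end Polynomial

open Polynomial in
theorem stmt_8_general {R : Type*} [CommRing R] [IsDomain R]
    (φ : R[X] →+* R[X]) (hφ : Function.Surjective φ)
    (hR : ∀ r : R, ∃ s : R, φ (C r) = C s) :
    ∀ r : R, ∃ s : R, φ (C s) = C r := by
  let f : R →+* R := constantCoeff.comp (φ.comp C)
  have hf : ∀ r, φ (C r) = C (f r) := fun r => by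
    obtain ⟨s, hs⟩ := hR r
    simp [f, hs]
  intro r
  obtain ⟨s, rfl⟩ := surjective_of_surjective_of_map_C hφ f hf r
  exact ⟨s, hf s⟩

open Polynomial in
theorem stmt_8 {R : Type*} [CommRing R] [IsDomain R]
    (hHopf : ∀ g : R →+* R, Function.Surjective g → Function.Bijective g)
    (φ : R[X] →+* R[X]) (hφ : Function.Surjective φ)
    (hR : ∀ r : R, ∃ s : R, φ (C r) = C s) :
    ∀ r : R, ∃ s : R, φ (C s) = C r :=
  stmt_8_general φ hφ hR
end

section
/- Let R be a commutative Hopfian integral domain and φ : R[x] → R[x] a surjective ring homomorphism with φ(R) ⊆ R. Then φ(x) = b₀ + b₁x where b₁ is a unit of R, and φ is an automorphism of R[x]. -/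
/-!
Write `G : R →+* R` for the map induced by `φ` on constants, `G r = (φ (C r)).coeff 0`, so that
`φ p = (p.map G).comp (φ X)`. Since `X` lies in the image of `φ`, it is a composite `q.comp (φ X)`; comparing degrees and leading
coefficients in the domain `R` forces `φ X` to be linear with unit leading coefficient. Composition
with a polynomial of positive degree sends only constants to constants, so surjectivity of `φ`
makes `G` surjective, hence bijective by the Hopf property, and composition with `φ X` kills only
`0`, so `φ` is injective.
-/

namespace Polynomial

section CommSemiring

variable {R S : Type*} [CommSemiring R] [CommSemiring S]

theorem apply_eq_map_comp {φ : R[X] →+* S[X]} {G : R →+* S} (hC : φ.comp C = C.comp G)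
    (p : R[X]) : φ p = (p.map G).comp (φ X) := by
  have hφ : φ = eval₂RingHom (C.comp G) (φ X) := ringHom_ext' (by rw [hC]; ext; simp) (by simp)
  rw [comp, eval₂_map, ← coe_eval₂RingHom, ← hφ]

end CommSemiring

section Domain

variable {R : Type*} [CommRing R] [IsDomain R] {f q : R[X]}

theorem natDegree_eq_one_of_X_eq_comp (h : X = q.comp f) : f.natDegree = 1 := by
  have hdeg := congrArg natDegree h
  rw [natDegree_X, natDegree_comp] at hdeg
  exact Nat.dvd_one.mp ⟨_, by rw [hdeg, mul_comm]⟩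

theorem isUnit_leadingCoeff_of_X_eq_comp (h : X = q.comp f) : IsUnit f.leadingCoeff := by
  have hf := natDegree_eq_one_of_X_eq_comp h
  have hq : q.natDegree = 1 := by
    have hdeg := congrArg natDegree h
    rwa [natDegree_X, natDegree_comp, hf, mul_one, eq_comm] at hdeg
  have hlead := congrArg leadingCoeff h
  rw [leadingCoeff_X, leadingCoeff_comp (by rw [hf]; exact one_ne_zero), hq, pow_one] at hlead
  exact .of_mul_eq_one_right _ hlead.symm

theorem eq_C_of_comp_eq_C (hf : f.natDegree ≠ 0) {a : R} (h : q.comp f = C a) : q = C a := by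
  have hq : q.natDegree = 0 := by
    have hdeg := congrArg natDegree h
    rw [natDegree_comp, natDegree_C, mul_eq_zero] at hdeg
    exact hdeg.resolve_right hf
  rw [eq_C_of_natDegree_eq_zero hq, C_comp] at h
  rw [eq_C_of_natDegree_eq_zero hq, h]

theorem comp_ne_zero_of_natDegree_ne_zero (hf : f.natDegree ≠ 0) (hq : q ≠ 0) :
    q.comp f ≠ 0 := by
  rw [Ne, comp_eq_zero_iff, not_or, not_and_or]
  refine ⟨hq, Or.inr fun hfC => hf ?_⟩
  rw [hfC, natDegree_C]

variable {φ : R[X] →+* R[X]} {G : R →+* R}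

theorem surjective_of_comp_C_eq (hC : φ.comp C = C.comp G) (hφ : Function.Surjective φ) :
    Function.Surjective G := by
  obtain ⟨q, hq⟩ := hφ X
  have hX : (φ X).natDegree ≠ 0 := by
    rw [natDegree_eq_one_of_X_eq_comp (hq ▸ apply_eq_map_comp hC q)]
    exact one_ne_zero
  intro s
  obtain ⟨p, hp⟩ := hφ (C s)
  have hpC : p.map G = C s := eq_C_of_comp_eq_C hX (by rw [← apply_eq_map_comp hC, hp])
  exact ⟨p.coeff 0, by simpa using congrArg (coeff · 0) hpC⟩

theorem injective_of_comp_C_eq (hC : φ.comp C = C.comp G) (hG : Function.Injective G)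
    (hX : (φ X).natDegree ≠ 0) : Function.Injective φ := by
  refine (injective_iff_map_eq_zero φ).mpr fun p hp => ?_
  by_contra hne
  have hmap : p.map G ≠ 0 := by
    rwa [Ne, ← Polynomial.map_zero G, (map_injective G hG).eq_iff]
  exact comp_ne_zero_of_natDegree_ne_zero hX hmap (apply_eq_map_comp hC p ▸ hp)

end Domain

end Polynomial

open Polynomial in
theorem stmt_9 {R : Type*} [CommRing R] [IsDomain R]
    (hHopf : ∀ g : R →+* R, Function.Surjective g → Function.Bijective g)
    (φ : R[X] →+* R[X]) (hφ : Function.Surjective φ)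
    (hR : ∀ r : R, ∃ s : R, φ (C r) = C s) :
    (∃ b₀ b₁ : R, IsUnit b₁ ∧ φ X = C b₀ + C b₁ * X) ∧ Function.Bijective φ := by
  set G : R →+* R := constantCoeff.comp (φ.comp C)
  have hC : φ.comp C = C.comp G := by
    ext r
    obtain ⟨s, hs⟩ := hR r
    simp [G, hs]
  obtain ⟨q, hq⟩ := hφ X
  have hXcomp : X = (q.map G).comp (φ X) := by rw [← apply_eq_map_comp hC, hq]
  have hdeg := natDegree_eq_one_of_X_eq_comp hXcomp
  have hunit := isUnit_leadingCoeff_of_X_eq_comp hXcomp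
  rw [leadingCoeff, hdeg] at hunit
  have hG := hHopf G (surjective_of_comp_C_eq hC hφ)
  have hφX : φ X = C ((φ X).coeff 0) + C ((φ X).coeff 1) * X := by
    rw [add_comm]
    exact eq_X_add_C_of_natDegree_le_one hdeg.le
  exact ⟨⟨_, _, hunit, hφX⟩,
    injective_of_comp_C_eq hC hG.1 (by rw [hdeg]; exact one_ne_zero), hφ⟩
end

section
/- Let R be a commutative Hopfian integral domain and φ : R[x] → R[x] a surjective ring homomorphism. If there exists an automorphism ψ of R[x] such that (ψ ∘ φ)(R) ⊆ R, then φ is an automorphism of R[x]. -/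
/-!
Composing `φ` with `ψ` gives a surjective endomorphism `α` of `R[X]` that preserves `R`, so
`α q = (q.map g).comp p` with `g = α|_R` and `p = α X`. Hitting `X` forces `deg p = 1`; then
hitting constants forces `g` to be surjective, hence bijective since `R` is Hopfian. An injective
`g` together with a nonconstant `p` makes `q ↦ (q.map g).comp p` injective, so `α`, and with it
`φ`, is injective.
-/

namespace Polynomial

variable {R : Type*}

theorem exists_ringHom_comp_C_eq [CommSemiring R] (α : R[X] →+* R[X])
    (h : ∀ r : R, ∃ s : R, α (C r) = C s) : ∃ g : R →+* R, α.comp C = C.comp g := by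
  refine ⟨constantCoeff.comp (α.comp C), RingHom.ext fun r => ?_⟩
  obtain ⟨s, hs⟩ := h r
  simp [hs]

theorem eq_compRingHom_comp_mapRingHom [CommSemiring R] {α : R[X] →+* R[X]} {g : R →+* R}
    (hg : α.comp C = C.comp g) : α = (compRingHom (α X)).comp (mapRingHom g) := by
  refine ringHom_ext (fun r => ?_) (by simp)
  simpa using RingHom.congr_fun hg r

variable [CommRing R] [IsDomain R] {g : R →+* R} {p : R[X]}

theorem natDegree_eq_one_of_surjective_comp_map
    (hsurj : Function.Surjective ((compRingHom p).comp (mapRingHom g))) : p.natDegree = 1 := by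
  obtain ⟨q, hq⟩ := hsurj X
  have hdeg : (q.map g).natDegree * p.natDegree = 1 := by
    rw [← natDegree_comp]
    simpa using congrArg natDegree hq
  exact Nat.eq_one_of_mul_eq_one_left hdeg

theorem surjective_of_surjective_comp_map
    (hsurj : Function.Surjective ((compRingHom p).comp (mapRingHom g))) :
    Function.Surjective g := by
  intro s
  obtain ⟨q, hq⟩ := hsurj (C s)
  simp only [RingHom.coe_comp, Function.comp_apply, coe_mapRingHom, coe_compRingHom_apply] at hq
  have hconst : (q.map g).natDegree = 0 := by
    simpa [natDegree_comp, natDegree_eq_one_of_surjective_comp_map hsurj] using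
      congrArg natDegree hq
  rw [eq_C_of_natDegree_eq_zero hconst, C_comp, C_inj, coeff_map] at hq
  exact ⟨q.coeff 0, hq⟩

theorem injective_comp_map (hg : Function.Injective g) (hp : p.natDegree ≠ 0) :
    Function.Injective ((compRingHom p).comp (mapRingHom g)) := by
  rw [injective_iff_map_eq_zero]
  intro q hq
  rcases comp_eq_zero_iff.mp hq with hmap | ⟨-, hpC⟩
  · exact (Polynomial.map_eq_zero_iff hg).mp hmap
  · exact absurd (by rw [hpC, natDegree_C]) hp

end Polynomial

open Polynomial in
theorem stmt_10 {R : Type*} [CommRing R] [IsDomain R]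
    (hHopf : ∀ g : R →+* R, Function.Surjective g → Function.Bijective g)
    (φ : R[X] →+* R[X]) (hφ : Function.Surjective φ)
    (ψ : R[X] ≃+* R[X]) (h : ∀ r : R, ∃ s : R, ψ (φ (C r)) = C s) :
    Function.Bijective φ := by
  set α : R[X] →+* R[X] := (ψ : R[X] →+* R[X]).comp φ
  obtain ⟨g, hg⟩ := exists_ringHom_comp_C_eq α h
  have hα := eq_compRingHom_comp_mapRingHom hg
  have hαsurj : Function.Surjective α := ψ.surjective.comp hφ
  rw [hα] at hαsurj
  have hginj : Function.Injective g := (hHopf g (surjective_of_surjective_comp_map hαsurj)).1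
  have hαinj : Function.Injective α := by
    rw [hα]
    exact injective_comp_map hginj (by simp [natDegree_eq_one_of_surjective_comp_map hαsurj])
  exact ⟨Function.Injective.of_comp (f := ψ) hαinj, hφ⟩
end

section
/- Let R be a commutative reduced clean ring. If f : R[x] → R[x] is a ring homomorphism, then f(R) ⊆ R, i.e., f maps constant polynomials to constant polynomials. -/
open Polynomial

lemma unit_is_C {R : Type*} [CommRing R] [IsReduced R] {p : R[X]} (hp : IsUnit p) :
    ∃ r : R, p = C r := by
  obtain ⟨h0, hn⟩ := Polynomial.isUnit_iff_coeff_isUnit_isNilpotent.mp hp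
  refine ⟨p.coeff 0, Polynomial.ext fun n => ?_⟩
  rcases Nat.eq_zero_or_pos n with h | h
  · simp [h]
  · rw [Polynomial.coeff_C, if_neg h.ne']
    exact IsReduced.eq_zero _ (hn n h.ne')

lemma idem_is_C {R : Type*} [CommRing R] [IsReduced R] {p : R[X]} (hp : p * p = p) :
    ∃ r : R, p = C r := by
  by_cases h0 : p = 0
  · exact ⟨0, by simp [h0]⟩
  rcases Nat.eq_zero_or_pos p.natDegree with h | h
  · exact Polynomial.natDegree_eq_zero.mp h |>.imp fun a ha => ha.symm
  · exfalso
    have hc : (p * p).coeff (p.natDegree + p.natDegree) = p.leadingCoeff * p.leadingCoeff :=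
      Polynomial.coeff_mul_degree_add_degree p p
    rw [hp, Polynomial.coeff_eq_zero_of_natDegree_lt (by omega)] at hc
    have : p.leadingCoeff = 0 :=
      IsReduced.eq_zero _ ⟨2, by rw [sq]; exact hc.symm⟩
    exact h0 (Polynomial.leadingCoeff_eq_zero.mp this)

open Polynomial in
theorem stmt_11 {R : Type*} [CommRing R] [IsReduced R]
    (hclean : ∀ a : R, ∃ u e : R, IsUnit u ∧ IsIdempotentElem e ∧ a = u + e)
    (f : R[X] →+* R[X]) :
    ∀ r : R, ∃ s : R, f (C r) = C s := by
  intro r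
  obtain ⟨u, e, hu, he, hr⟩ := hclean r
  obtain ⟨a, ha⟩ := unit_is_C ((hu.map C).map f)
  have hfe : f (C e) * f (C e) = f (C e) := by
    rw [← map_mul, ← map_mul, he]
  obtain ⟨b, hb⟩ := idem_is_C hfe
  exact ⟨a + b, by rw [hr, map_add, map_add, ha, hb, map_add]⟩
end

section
/- Let R be a commutative reduced clean ring and f : R[x] → R[x] a surjective ring homomorphism. Writing R[x] = R ⊕ I with I = {p : p(0)=0} and f in upper-triangular form (so f(R) ⊆ R), the component φ₂₂ : I → I satisfies φ₂₂(x) = ux for some unit u ∈ R. -/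
open Polynomial in
theorem stmt_15 {R : Type*} [CommRing R] [IsReduced R]
    (hclean : ∀ a : R, ∃ u e : R, IsUnit u ∧ IsIdempotentElem e ∧ a = u + e)
    (f : R[X] →+* R[X]) (hf : Function.Surjective f)
    (hR : ∀ r : R, ∃ s : R, f (C r) = C s) :
    ∃ u : R, IsUnit u ∧ f X - C ((f X).coeff 0) = C u * X := by
  classical
  set q : R[X] := f X with hq
  -- the induced endomorphism of R
  set σ : R →+* R := (constantCoeff).comp (f.comp C) with hσ
  have hσC : ∀ r : R, f (C r) = C (σ r) := by
    intro r
    obtain ⟨s, hs⟩ := hR r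
    simp [hσ, hs]
  obtain ⟨p, hp⟩ := hf X
  have hfp : f p = eval₂ (f.comp C) (f X) p := by
    conv_lhs => rw [← eval₂_C_X (p := p)]
    exact hom_eval₂ p C f X
  -- key: modulo every prime, q has natDegree 1
  have key : ∀ (P : Ideal R), P.IsPrime →
      (q.map (Ideal.Quotient.mk P)).natDegree = 1 := by
    intro P hP
    set π := Ideal.Quotient.mk P
    have hmap : (X : (R ⧸ P)[X]) =
        ((p.map (π.comp σ)).comp (q.map π)) := by
      have h1 : (mapRingHom π) (f p) =
          eval₂ ((mapRingHom π).comp (f.comp C)) ((mapRingHom π) (f X)) p :=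
        by rw [hfp]; exact hom_eval₂ p (f.comp C) (mapRingHom π) (f X)
      have h2 : (mapRingHom π).comp (f.comp C)
          = (C : (R ⧸ P) →+* (R ⧸ P)[X]).comp (π.comp σ) := by
        ext r
        simp [hσC r]
      rw [hp] at h1
      have h3 : (mapRingHom π) (X : R[X]) = X := by simp
      rw [h3, h2] at h1
      rw [h1, comp, eval₂_map]
      rfl
    have := congrArg natDegree hmap
    rw [natDegree_X, natDegree_comp] at this
    exact (Nat.eq_one_of_mul_eq_one_left this.symm)
  -- coefficients of q vanish in degrees ≥ 2
  have hcoeff : ∀ i, 2 ≤ i → q.coeff i = 0 := by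
    intro i hi
    have : IsNilpotent (q.coeff i) := by
      rw [nilpotent_iff_mem_prime]
      intro P hP
      have h1 := key P hP
      have h2 : ((q.map (Ideal.Quotient.mk P)).coeff i) = 0 :=
        coeff_eq_zero_of_natDegree_lt (by omega)
      rw [coeff_map] at h2
      exact (Ideal.Quotient.eq_zero_iff_mem).mp h2
    exact this.eq_zero
  -- q.coeff 1 is a unit
  have hunit : IsUnit (q.coeff 1) := by
    by_contra h
    obtain ⟨M, hM, hmem⟩ := exists_max_ideal_of_mem_nonunits (mem_nonunits_iff.mpr h)
    have hP : M.IsPrime := hM.isPrime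
    have h1 := key M hP
    have hne : (q.map (Ideal.Quotient.mk M)) ≠ 0 := by
      intro h0
      rw [h0, natDegree_zero] at h1
      exact zero_ne_one h1
    have h2 : (q.map (Ideal.Quotient.mk M)).coeff 1 ≠ 0 := by
      apply coeff_ne_zero_of_eq_degree
      rw [degree_eq_natDegree hne, h1]
    rw [coeff_map] at h2
    exact h2 ((Ideal.Quotient.eq_zero_iff_mem).mpr hmem)
  refine ⟨q.coeff 1, hunit, ?_⟩
  ext n
  rcases n with _ | _ | n
  · simp
  · simp
  · simp only [coeff_sub, coeff_C_mul, coeff_X, coeff_C]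
    rw [hcoeff (n + 2) (by omega)]
    simp
end

section
/- Let R be a commutative reduced clean ring that is Hopfian. Then the polynomial ring R[x] is Hopfian: every surjective ring homomorphism R[x] → R[x] is an automorphism. -/
/-!
Modulo a prime ideal `Q`, units and idempotents of `R[X]` become units and idempotents of the
polynomial ring over the domain `R ⧸ Q`, hence constants. As `R` is reduced, a coefficient that
vanishes modulo every prime vanishes; so in a clean reduced ring every endomorphism `f` of `R[X]`
sends constants to constants, i.e. `f p = (p.map g).comp t` for some `g : R →+* R` and `t = f X`.
If `f` is onto, then `X = q.comp t` for some `q`, which forces `t` to be linear modulo every prime,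
hence `t = a X + b` with `a` a unit. Composing with the inverse substitution recovers `p.map g`
from `f p`, so `g` is onto, hence injective by hypothesis, and then so is `f`.
-/

namespace Polynomial

variable {R S : Type*} [CommRing R] [CommRing S]

theorem natDegree_le_of_forall_isPrime_natDegree_map_le [IsReduced R] {p : R[X]} {n : ℕ}
    (h : ∀ Q : Ideal R, Q.IsPrime → (p.map (Ideal.Quotient.mk Q)).natDegree ≤ n) :
    p.natDegree ≤ n := by
  refine natDegree_le_iff_coeff_eq_zero.mpr fun m hm => IsReduced.eq_zero _ ?_
  rw [← mem_nilradical, nilradical_eq_sInf, Submodule.mem_sInf]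
  intro Q hQ
  have : (p.map (Ideal.Quotient.mk Q)).coeff m = 0 :=
    coeff_eq_zero_of_natDegree_lt ((h Q hQ).trans_lt hm)
  rwa [coeff_map, Ideal.Quotient.eq_zero_iff_mem] at this

theorem natDegree_eq_zero_of_isIdempotentElem [IsDomain R] {p : R[X]} (hp : IsIdempotentElem p) :
    p.natDegree = 0 := by
  rcases IsIdempotentElem.iff_eq_zero_or_one.mp hp with rfl | rfl <;> simp

theorem natDegree_unit_add_idempotent [IsDomain R] {u e : R[X]} (hu : IsUnit u)
    (he : IsIdempotentElem e) : (u + e).natDegree = 0 := by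
  have := natDegree_add_le u e
  rw [natDegree_eq_zero_of_isUnit hu, natDegree_eq_zero_of_isIdempotentElem he] at this
  omega

theorem natDegree_eq_zero_of_isClean [IsReduced S]
    (hclean : ∀ a : R, ∃ u e : R, IsUnit u ∧ IsIdempotentElem e ∧ a = u + e)
    (φ : R →+* S[X]) (a : R) : (φ a).natDegree = 0 := by
  obtain ⟨u, e, hu, he, rfl⟩ := hclean a
  refine Nat.le_zero.mp (natDegree_le_of_forall_isPrime_natDegree_map_le fun Q _ => ?_)
  let ψ := (mapRingHom (Ideal.Quotient.mk Q)).comp φ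
  have := natDegree_unit_add_idempotent (hu.map ψ) (he.map ψ)
  rw [← map_add] at this
  exact this.le

theorem exists_eq_comp_map_of_natDegree_eq_zero (f : R[X] →+* S[X])
    (hf : ∀ a, (f (C a)).natDegree = 0) :
    ∃ g : R →+* S, ∀ p, f p = (p.map g).comp (f X) := by
  refine ⟨constantCoeff.comp (f.comp C), fun p => ?_⟩
  have : f = eval₂RingHom (C.comp (constantCoeff.comp (f.comp C))) (f X) := by
    refine ringHom_ext (fun a => ?_) (by simp)
    simpa using eq_C_of_natDegree_eq_zero (hf a)
  rw [DFunLike.congr_fun this p, coe_eval₂RingHom, comp, eval₂_map]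

theorem natDegree_eq_one_of_comp_eq_X [IsDomain R] {q t : R[X]} (h : q.comp t = X) :
    t.natDegree = 1 := by
  have := congrArg natDegree h
  rw [natDegree_comp, natDegree_X] at this
  exact Nat.eq_one_of_mul_eq_one_left this

theorem natDegree_map_quotient_eq_one_of_comp_eq_X {q t : R[X]} (h : q.comp t = X)
    (Q : Ideal R) [Q.IsPrime] : (t.map (Ideal.Quotient.mk Q)).natDegree = 1 :=
  natDegree_eq_one_of_comp_eq_X (q := q.map _) (by rw [← map_comp, h, map_X])

theorem natDegree_le_one_of_comp_eq_X [IsReduced R] {q t : R[X]} (h : q.comp t = X) :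
    t.natDegree ≤ 1 :=
  natDegree_le_of_forall_isPrime_natDegree_map_le fun Q _ =>
    (natDegree_map_quotient_eq_one_of_comp_eq_X h Q).le

theorem isUnit_coeff_one_of_comp_eq_X {q t : R[X]} (h : q.comp t = X) : IsUnit (t.coeff 1) := by
  by_contra hnu
  obtain ⟨M, hM, hmem⟩ := exists_max_ideal_of_mem_nonunits hnu
  have hdeg := natDegree_map_quotient_eq_one_of_comp_eq_X h M
  have hlead := leadingCoeff_ne_zero.mpr (ne_zero_of_natDegree_gt hdeg.symm.le)
  rw [leadingCoeff, hdeg, coeff_map, Ideal.Quotient.eq_zero_iff_mem.mpr hmem] at hlead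
  exact hlead rfl

theorem exists_comp_eq_X_of_comp_eq_X [IsReduced R] {q t : R[X]} (h : q.comp t = X) :
    ∃ w, t.comp w = X := by
  have key (a b : R) [Invertible a] : (C a * X + C b).comp (C ⅟a * (X - C b)) = X := by
    simp [← C_mul, ← mul_assoc]
  let := (isUnit_coeff_one_of_comp_eq_X h).invertible
  exact ⟨_, eq_X_add_C_of_natDegree_le_one (natDegree_le_one_of_comp_eq_X h) ▸ key _ _⟩

end Polynomial

open Polynomial in
theorem stmt_17 {R : Type*} [CommRing R] [IsReduced R]
    (hclean : ∀ a : R, ∃ u e : R, IsUnit u ∧ IsIdempotentElem e ∧ a = u + e)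
    (hHopf : ∀ g : R →+* R, Function.Surjective g → Function.Bijective g) :
    ∀ f : R[X] →+* R[X], Function.Surjective f → Function.Bijective f := by
  intro f hf
  obtain ⟨g, hfg⟩ := exists_eq_comp_map_of_natDegree_eq_zero f
    fun a => natDegree_eq_zero_of_isClean hclean (f.comp C) a
  obtain ⟨q, hq⟩ := hf X
  rw [hfg] at hq
  obtain ⟨w, hw⟩ := exists_comp_eq_X_of_comp_eq_X hq
  have hfw (p : R[X]) : (f p).comp w = p.map g := by rw [hfg, comp_assoc, hw, comp_X]
  have hg : Function.Surjective g := fun r => by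
    obtain ⟨p, hp⟩ := hf (C r)
    exact ⟨p.coeff 0, by simpa [hp] using congr(coeff $(hfw p) 0).symm⟩
  refine ⟨fun p p' h => map_injective g (hHopf g hg).1 ?_, hf⟩
  rw [← hfw, ← hfw, h]
end

section
/- Let R be a commutative reduced local ring. Then R is Hopfian if and only if the polynomial ring R[x] is Hopfian. -/
/-!
Units of `R[X]` over a reduced ring are constants, and in a local ring every `r` or `1 - r` is a
unit, so a ring endomorphism `f` of `R[X]` maps constants to constants: `f p = (p.map g).comp h`
with `g : R →+* R` and `h = f X`. If `f` is surjective then `h` has a left compositional inverse;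
reducing modulo every prime, where degrees multiply, shows `h = a X + b` with `a` a unit, so
composition with `h` is invertible. Hence `g` is surjective, so bijective, and `f` is injective.
-/

theorem eq_zero_of_forall_mem_prime {R : Type*} [CommRing R] [IsReduced R] {x : R}
    (hx : ∀ P : Ideal R, P.IsPrime → x ∈ P) : x = 0 :=
  (nilpotent_iff_mem_prime.mpr hx).eq_zero

namespace Polynomial

variable {R : Type*} [CommRing R]

theorem mem_range_C_of_isUnit [IsReduced R] {p : R[X]} (hp : IsUnit p) : p ∈ C.range :=
  natDegree_eq_zero.mp <| Nat.eq_zero_of_not_pos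
    fun hpos => not_isUnit_of_natDegree_pos_of_isReduced p hpos hp

theorem map_C_mem_range_C {S : Type*} [CommRing S] [IsLocalRing R] [IsReduced S]
    (f : R[X] →+* S[X]) (r : R) : f (C r) ∈ C.range := by
  rcases IsLocalRing.isUnit_or_isUnit_one_sub_self r with hr | hr
  · exact mem_range_C_of_isUnit ((hr.map C).map f)
  · have hsub := mem_range_C_of_isUnit ((hr.map C).map f)
    rw [map_sub, map_one, map_sub, map_one] at hsub
    have h1 := (C : S →+* S[X]).range.sub_mem (C : S →+* S[X]).range.one_mem hsub
    rwa [sub_sub_cancel] at h1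

theorem map_eq_map_comp_of_map_C {S : Type*} [CommRing S] {f : R[X] →+* S[X]} {g : R →+* S}
    (hC : ∀ r, f (C r) = C (g r)) (p : R[X]) : f p = (p.map g).comp (f X) := by
  rw [comp, eval₂_map, ← coe_eval₂RingHom]
  exact congrFun (congrArg DFunLike.coe (ringHom_ext (by simpa using hC) (by simp))) p

theorem natDegree_eq_one_of_comp_eq_X_s19 [IsDomain R] {w h : R[X]} (hw : w.comp h = X) :
    h.natDegree = 1 ∧ w.coeff 1 * h.coeff 1 = 1 := by
  have hdeg : w.natDegree * h.natDegree = 1 := by rw [← natDegree_comp, hw, natDegree_X]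
  have hw1 := Nat.eq_one_of_mul_eq_one_right hdeg
  have hh1 := Nat.eq_one_of_mul_eq_one_left hdeg
  have hlc := leadingCoeff_comp (p := w) (q := h) (by omega)
  rw [hw, leadingCoeff_X, hw1, pow_one] at hlc
  exact ⟨hh1, by simpa [leadingCoeff, hw1, hh1] using hlc.symm⟩

theorem natDegree_le_one_of_comp_eq_X_s19 [IsReduced R] {w h : R[X]} (hw : w.comp h = X) :
    h.natDegree ≤ 1 ∧ w.coeff 1 * h.coeff 1 = 1 := by
  have hmod (P : Ideal R) (hP : P.IsPrime) :=
    natDegree_eq_one_of_comp_eq_X_s19 (w := w.map (Ideal.Quotient.mk P))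
      (h := h.map (Ideal.Quotient.mk P)) (by rw [← map_comp, hw, map_X])
  refine ⟨natDegree_le_iff_coeff_eq_zero.mpr fun j hj =>
      eq_zero_of_forall_mem_prime fun P hP => ?_,
    sub_eq_zero.mp <| eq_zero_of_forall_mem_prime fun P hP => ?_⟩
  · have hcoeff := coeff_eq_zero_of_natDegree_lt (p := h.map (Ideal.Quotient.mk P)) (n := j)
      (by rw [(hmod P hP).1]; exact_mod_cast hj)
    rwa [coeff_map, Ideal.Quotient.eq_zero_iff_mem] at hcoeff
  · rw [← Ideal.Quotient.eq_zero_iff_mem, map_sub, map_mul, map_one, sub_eq_zero]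
    simpa only [coeff_map] using (hmod P hP).2

theorem comp_eq_X_of_comp_eq_X [IsReduced R] {w h : R[X]} (hw : w.comp h = X) :
    h.comp w = X := by
  obtain ⟨hdeg, hinv⟩ := natDegree_le_one_of_comp_eq_X_s19 hw
  -- `h` is affine with unit slope, so it has an explicit right inverse `t`, which must equal `w`.
  set t := C (w.coeff 1) * (X - C (h.coeff 0))
  have ht : h.comp t = X := by
    rw [eq_X_add_C_of_natDegree_le_one hdeg]
    simp only [add_comp, mul_comp, C_comp, X_comp, t, ← mul_assoc, ← C_mul,
      mul_comm (h.coeff 1), hinv, C_1, one_mul, sub_add_cancel]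
  have hwt : w = t := by rw [← comp_X (p := w), ← ht, ← comp_assoc, hw, X_comp]
  rwa [hwt]

theorem injective_of_surjective_of_isLocalRing [IsReduced R] [IsLocalRing R]
    (hR : ∀ g : R →+* R, Function.Surjective g → Function.Injective g)
    {f : R[X] →+* R[X]} (hf : Function.Surjective f) : Function.Injective f := by
  let g : R →+* R := constantCoeff.comp (f.comp C)
  have hC (r : R) : f (C r) = C (g r) := by
    obtain ⟨s, hs⟩ := map_C_mem_range_C f r
    simp [g, ← hs]
  have hF := map_eq_map_comp_of_map_C hC
  obtain ⟨q, hq⟩ := hf X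
  have hinv := comp_eq_X_of_comp_eq_X (hF q ▸ hq)
  have hcomp : Function.Injective fun p : R[X] => p.comp (f X) := fun p p' e => by
    simpa only [comp_assoc, hinv, comp_X] using congrArg (·.comp (q.map g)) e
  have hg : Function.Surjective g := fun r => by
    obtain ⟨p, hp⟩ := hf (C r)
    have hpC : p.map g = C r := hcomp <| show (p.map g).comp (f X) = (C r).comp (f X) by
      rw [C_comp, ← hF]; exact hp
    exact ⟨p.coeff 0, by simpa only [coeff_map, coeff_C_zero] using congrArg (coeff · 0) hpC⟩
  exact fun p p' e => map_injective g (hR g hg) (hcomp <| by rwa [hF p, hF p'] at e)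

end Polynomial

open Polynomial in
theorem stmt_19 {R : Type*} [CommRing R] [IsReduced R] [IsLocalRing R] :
    (∀ g : R →+* R, Function.Surjective g → Function.Bijective g) ↔
    (∀ f : R[X] →+* R[X], Function.Surjective f → Function.Bijective f) := by
  constructor
  · intro hR f hf
    exact ⟨injective_of_surjective_of_isLocalRing (fun g hg => (hR g hg).1) hf, hf⟩
  · intro hP g hg
    have hmap := hP (mapRingHom g) (map_surjective g hg)
    exact ⟨(map_injective_iff g).mp hmap.1, hg⟩
end
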